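/- arXiv:2602.16152 — 2 statements merged into one kernel-verified Lean document; each statement's English description precedes it below -/
import Mathlib

section
/- For every n ≥ 8, if every pair in (L_{n-4} ∪ R_{n-4}) ⊗ L_{n-3} is a smallest string attractor of the Fibonacci word F_{n-1}, then every pair in R_{n-3} ⊗ L_{n-2} is a smallest string attractor of F_n. -/
/-- Fibonacci numbers: f 0 = f 1 = 1, f (n+2) = f (n+1) + f n. -/
def fib : ℕ → ℕ
  | 0 => 1
  | 1 => 1
  | n + 2 => fib (n + 1) + fib n

/-- Fibonacci words over {a, b}; `false` encodes `a`, `true` encodes `b`. -/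
def F : ℕ → List Bool
  | 0 => [true]
  | 1 => [false]
  | n + 2 => F (n + 1) ++ F n

/-- Singular words: S 0 = a, S 1 = b, S 2 = S 0 · S₋₁ · S 0 = aa,
and S n = S (n-2) · S (n-3) · S (n-2) for n ≥ 3. -/
def S : ℕ → List Bool
  | 0 => [false]
  | 1 => [true]
  | 2 => [false, false]
  | n + 3 => S (n + 1) ++ S n ++ S (n + 1)

/-- `w` occurs in `T` at (1-based) position `i`, i.e. `w = T[i .. i + |w| - 1]`. -/
def OccursAt {α : Type*} (T w : List α) (i : ℕ) : Prop :=
  1 ≤ i ∧ i + w.length ≤ T.length + 1 ∧ (T.drop (i - 1)).take w.length = w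

/-- `Γ` is a string attractor of `T`: a set of (1-based) positions of `T` such that
every nonempty substring of `T` has an occurrence crossing a position of `Γ`. -/
def IsAttractor {α : Type*} (T : List α) (Γ : Finset ℕ) : Prop :=
  (∀ k ∈ Γ, 1 ≤ k ∧ k ≤ T.length) ∧
  ∀ w : List α, w ≠ [] → w <:+: T →
    ∃ i, OccursAt T w i ∧ ∃ k ∈ Γ, i ≤ k ∧ k < i + w.length

/-- `Γ` is a smallest string attractor of `T`. -/
def IsSmallestAttractor {α : Type*} (T : List α) (Γ : Finset ℕ) : Prop :=
  IsAttractor T Γ ∧ ∀ Γ' : Finset ℕ, IsAttractor T Γ' → Γ.card ≤ Γ'.card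

/-- The set of all smallest string attractors of `T`. -/
def Att {α : Type*} (T : List α) : Set (Finset ℕ) := {Γ | IsSmallestAttractor T Γ}

/-- The position sets L_k: L_2 = {3}, L_3 = {5},
L_k = (L_{k-2} ∪ R_{k-2}) ⊕ f_k for k ≥ 4 (with R_{k-2} = L_{k-2} ⊕ f_{k-3}). -/
def Lset : ℕ → Finset ℕ
  | 0 => ∅
  | 1 => ∅
  | 2 => {3}
  | 3 => {5}
  | k + 4 => ((Lset (k + 2)) ∪ (Lset (k + 2)).image (· + fib (k + 1))).image (· + fib (k + 4))

/-- The position sets R_k = L_k ⊕ f_{k-1} (so R_2 = {4}, R_3 = {7}). -/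
def Rset (k : ℕ) : Finset ℕ := (Lset k).image (· + fib (k - 1))

/-- X ⊗ Y := { {x, y} : x ∈ X, y ∈ Y }. -/
def pairSet (X Y : Finset ℕ) : Set (Finset ℕ) := {Γ | ∃ x ∈ X, ∃ y ∈ Y, Γ = {x, y}}

lemma fib_add2 (k : ℕ) : fib (k+2) = fib (k+1) + fib k := rfl

lemma fib_pos : ∀ k, 1 ≤ fib k := by
  intro k
  induction k using Nat.strong_induction_on with
  | _ k ih =>
    match k with
    | 0 => exact le_refl 1
    | 1 => exact le_refl 1
    | (k+2) => have h := ih k (by omega); rw [fib_add2]; omega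

lemma fib_two_le (k : ℕ) : 2 ≤ fib (k+2) := by
  have := fib_pos k; have := fib_pos (k+1); rw [fib_add2]; omega

lemma F_length : ∀ k, (F k).length = fib k := by
  intro k
  induction k using Nat.strong_induction_on with
  | _ k ih =>
    match k with
    | 0 => rfl
    | 1 => rfl
    | (k+2) =>
      show (F (k+1) ++ F k).length = fib (k+1) + fib k
      rw [List.length_append, ih (k+1) (by omega), ih k (by omega)]

lemma F_take_eq (k t : ℕ) (h : t ≤ fib (k+1)) : (F (k+2)).take t = (F (k+1)).take t := by
  show ((F (k+1) ++ F k).take t) = _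
  exact List.take_append_of_le_length (by rw [F_length]; exact h)

lemma Fcomm : ∀ k, (F (k+1) ++ F k).take (fib (k+2) - 2) = (F k ++ F (k+1)).take (fib (k+2) - 2) := by
  intro k
  induction k with
  | zero => rfl
  | succ k ih =>
    rw [show k+1+1 = k+2 from rfl, show k+1+2 = k+3 from rfl]
    have h2 : 2 ≤ fib (k+2) := fib_two_le k
    have hq3 : fib (k+3) = fib (k+2) + fib (k+1) := fib_add2 (k+1)
    have e : fib (k+3) - 2 = fib (k+1) + (fib (k+2) - 2) := by omega
    have l1 : F (k+2) ++ F (k+1) = F (k+1) ++ (F k ++ F (k+1)) := by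
      rw [show F (k+2) = F (k+1) ++ F k from rfl, List.append_assoc]
    have l2 : F (k+1) ++ F (k+2) = F (k+1) ++ (F (k+1) ++ F k) := rfl
    rw [l1, l2, e, show fib (k+1) = (F (k+1)).length from (F_length _).symm,
      List.take_length_add_append, List.take_length_add_append]
    congr 1
    exact ih.symm

lemma infix_occursAt {α : Type*} {T w : List α} (hw : w <:+: T) : ∃ i, OccursAt T w i := by
  obtain ⟨u, v, huv⟩ := hw
  refine ⟨u.length + 1, Nat.le_add_left _ _, ?_, ?_⟩
  · rw [← huv]; simp [List.length_append]; omega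
  · rw [show u.length + 1 - 1 = u.length from rfl, ← huv, List.append_assoc, List.drop_left,
      List.take_left]

lemma occursAt_infix {α : Type*} {T w : List α} {i : ℕ} (h : OccursAt T w i) : w <:+: T := by
  obtain ⟨-, -, hw⟩ := h
  refine ⟨T.take (i-1), (T.drop (i-1)).drop w.length, ?_⟩
  conv_rhs => rw [← List.take_append_drop (i-1) T, ← List.take_append_drop w.length (T.drop (i-1))]
  rw [hw, List.append_assoc]

lemma occ_transfer {α : Type*} {A B : List α} {a b t : ℕ}
    (h : (A.drop a).take t = (B.drop b).take t) (hA : a + t ≤ A.length)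
    {w : List α} {i : ℕ} (hi : b + 1 ≤ i) (hit : i - 1 + w.length ≤ b + t)
    (hB : OccursAt B w i) : OccursAt A w (a + (i - b)) := by
  obtain ⟨hi1, hib, hw⟩ := hB
  have hs : i - 1 - b + w.length ≤ t := by omega
  refine ⟨by omega, by omega, ?_⟩
  have key : ∀ (X : List α), ((X.take t).drop (i-1-b)).take w.length
      = (X.drop (i-1-b)).take w.length := by
    intro X
    rw [List.drop_take, List.take_take]
    congr 1
    exact inf_eq_left.mpr (by omega)
  have e1 : a + (i - b) - 1 = a + (i - 1 - b) := by omega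
  rw [e1, ← List.drop_drop, ← key (A.drop a), h, key (B.drop b), List.drop_drop]
  have e2 : b + (i - 1 - b) = i - 1 := by omega
  rw [e2]; exact hw

lemma Lset_bounds : ∀ k, ∀ a ∈ Lset k, fib (k+1) ≤ a ∧ a ≤ 2 * fib k - 1 := by
  intro k
  induction k using Nat.strong_induction_on with
  | _ k ih =>
    match k, ih with
    | 0, _ => intro a ha; simp [Lset] at ha
    | 1, _ => intro a ha; simp [Lset] at ha
    | 2, _ => intro a ha; simp [Lset] at ha; subst ha; decide
    | 3, _ => intro a ha; simp [Lset] at ha; subst ha; decide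
    | (k+4), ih =>
      intro a ha
      rw [show Lset (k+4) = ((Lset (k + 2)) ∪ (Lset (k + 2)).image (· + fib (k + 1))).image
        (· + fib (k + 4)) from rfl] at ha
      simp only [Finset.mem_image, Finset.mem_union] at ha
      obtain ⟨b, hb, rfl⟩ := ha
      have hq2 : fib (k+2) = fib (k+1) + fib k := fib_add2 k
      have hq3 : fib (k+3) = fib (k+2) + fib (k+1) := fib_add2 (k+1)
      have hq4 : fib (k+4) = fib (k+3) + fib (k+2) := fib_add2 (k+2)
      have hq5 : fib (k+5) = fib (k+4) + fib (k+3) := fib_add2 (k+3)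
      have hp := fib_pos k; have hp1 := fib_pos (k+1)
      rw [show k+4+1 = k+5 from rfl]
      rcases hb with hb | ⟨c, hc, rfl⟩
      · have H := ih (k+2) (by omega) b hb
        rw [show k+2+1 = k+3 from rfl] at H
        omega
      · have H := ih (k+2) (by omega) c hc
        rw [show k+2+1 = k+3 from rfl] at H
        omega

lemma F_take_two : ∀ k, (F (k+2)).take 2 = [false, true] := by
  intro k
  induction k with
  | zero => rfl
  | succ k ih =>
    show ((F (k+2) ++ F (k+1)).take 2) = _
    rw [List.take_append_of_le_length (by rw [F_length]; exact fib_two_le k)]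
    exact ih

/-- For every n ≥ 8, if every pair in (L_{n-4} ∪ R_{n-4}) ⊗ L_{n-3}
is a smallest string attractor of F_{n-1}, then every pair in R_{n-3} ⊗ L_{n-2}
is a smallest string attractor of F_n. -/
theorem fib_valid_att_from_flip :
    ∀ n : ℕ, 8 ≤ n →
      pairSet (Lset (n - 4) ∪ Rset (n - 4)) (Lset (n - 3)) ⊆ Att (F (n - 1)) →
      pairSet (Rset (n - 3)) (Lset (n - 2)) ⊆ Att (F n) := by
  intro n hn hhyp
  obtain ⟨m, rfl⟩ : ∃ m, n = m + 8 := ⟨n - 8, by omega⟩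
  rw [show m+8-4 = m+4 from rfl, show m+8-3 = m+5 from rfl, show m+8-1 = m+7 from rfl] at hhyp
  rw [show m+8-3 = m+5 from rfl, show m+8-2 = m+6 from rfl]
  intro Γ hΓ
  simp only [pairSet, Set.mem_setOf_eq] at hΓ
  obtain ⟨r, hr, s, hs, rfl⟩ := hΓ
  simp only [Rset, show m+5-1 = m+4 from rfl, Finset.mem_image] at hr
  obtain ⟨y, hy, rfl⟩ := hr
  rw [show Lset (m+6) = ((Lset (m+4)) ∪ (Lset (m+4)).image (· + fib (m+3))).image
      (· + fib (m+6)) from rfl] at hs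
  simp only [Finset.mem_image] at hs
  obtain ⟨x, hxU, rfl⟩ := hs
  have hxLR : x ∈ Lset (m+4) ∪ Rset (m+4) := by
    rw [Rset, show m+4-1 = m+3 from rfl]; exact hxU
  -- fib equations and positivity
  have q4 : fib (m+4) = fib (m+3) + fib (m+2) := fib_add2 (m+2)
  have q5 : fib (m+5) = fib (m+4) + fib (m+3) := fib_add2 (m+3)
  have q6 : fib (m+6) = fib (m+5) + fib (m+4) := fib_add2 (m+4)
  have q7 : fib (m+7) = fib (m+6) + fib (m+5) := fib_add2 (m+5)
  have q8 : fib (m+8) = fib (m+7) + fib (m+6) := fib_add2 (m+6)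
  have p2 := fib_pos (m+2); have p3 := fib_pos (m+3); have p4 := fib_pos (m+4)
  -- bounds for x and y
  have hyB : fib (m+6) ≤ y ∧ y ≤ 2 * fib (m+5) - 1 := by
    have H := Lset_bounds (m+5) y hy
    rw [show m+5+1 = m+6 from rfl] at H
    exact H
  have hxB : fib (m+5) ≤ x ∧ x ≤ fib (m+6) - 1 := by
    rcases Finset.mem_union.mp hxLR with h | h
    · have H := Lset_bounds (m+4) x h
      rw [show m+4+1 = m+5 from rfl] at H
      omega
    · rw [Rset, show m+4-1 = m+3 from rfl] at h
      simp only [Finset.mem_image] at h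
      obtain ⟨c, hc, rfl⟩ := h
      have H := Lset_bounds (m+4) c hc
      rw [show m+4+1 = m+5 from rfl] at H
      omega
  -- hypothesis attractor
  have hpair : ({x, y} : Finset ℕ) ∈ pairSet (Lset (m+4) ∪ Rset (m+4)) (Lset (m+5)) :=
    ⟨x, hxLR, y, hy, rfl⟩
  have hatt : IsAttractor (F (m+7)) {x, y} := (hhyp hpair).1
  -- window equalities
  have hD1 : F (m+8) = F (m+7) ++ F (m+6) := rfl
  have hD2 : (F (m+8)).drop (fib (m+6)) = F (m+5) ++ F (m+6) := by
    rw [show F (m+8) = F (m+6) ++ (F (m+5) ++ F (m+6)) from by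
      rw [hD1, show F (m+7) = F (m+6) ++ F (m+5) from rfl, List.append_assoc]]
    exact List.drop_left' (F_length _)
  have hD3 : (F (m+7)).drop (fib (m+5)) = F (m+4) ++ F (m+5) := by
    rw [show F (m+7) = F (m+5) ++ (F (m+4) ++ F (m+5)) from by
      rw [show F (m+7) = F (m+6) ++ F (m+5) from rfl,
        show F (m+6) = F (m+5) ++ F (m+4) from rfl, List.append_assoc]]
    exact List.drop_left' (F_length _)
  have C5 := Fcomm (m+5)
  rw [show m+5+1 = m+6 from rfl, show m+5+2 = m+7 from rfl] at C5
  have C4 := Fcomm (m+4)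
  rw [show m+4+1 = m+5 from rfl, show m+4+2 = m+6 from rfl] at C4
  have hW1 : ((F (m+8)).drop 0).take (fib (m+7)) = ((F (m+7)).drop 0).take (fib (m+7)) := by
    rw [List.drop_zero, List.drop_zero, hD1,
      List.take_append_of_le_length (by rw [F_length])]
  have hW2 : ((F (m+8)).drop (fib (m+6))).take (fib (m+7) - 2)
      = ((F (m+7)).drop 0).take (fib (m+7) - 2) := by
    rw [List.drop_zero, hD2, show F (m+7) = F (m+6) ++ F (m+5) from rfl]
    exact C5.symm
  have hW3 : ((F (m+8)).drop (fib (m+6))).take (fib (m+6) - 2)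
      = ((F (m+7)).drop (fib (m+5))).take (fib (m+6) - 2) := by
    rw [hD2, hD3]
    have e1 : (F (m+5) ++ F (m+6)).take (fib (m+6) - 2)
        = (F (m+5) ++ F (m+4)).take (fib (m+6) - 2) := by
      rw [show fib (m+6) - 2 = (F (m+5)).length + (fib (m+4) - 2) from by rw [F_length]; omega,
        List.take_length_add_append, List.take_length_add_append]
      congr 1
      have e2 := F_take_eq (m+4) (fib (m+4) - 2) (by rw [show m+4+1 = m+5 from rfl]; omega)
      rw [show m+4+2 = m+6 from rfl, show m+4+1 = m+5 from rfl] at e2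
      have e3 := F_take_eq (m+3) (fib (m+4) - 2) (by rw [show m+3+1 = m+4 from rfl]; omega)
      rw [show m+3+2 = m+5 from rfl, show m+3+1 = m+4 from rfl] at e3
      rw [e2, e3]
    rw [e1]
    exact C4
  have hW4 : ((F (m+7)).drop 0).take (fib (m+6)) = ((F (m+8)).drop (fib (m+7))).take (fib (m+6)) := by
    rw [List.drop_zero, hD1, List.drop_left' (F_length _),
      show F (m+7) = F (m+6) ++ F (m+5) from rfl,
      List.take_append_of_le_length (by rw [F_length])]
  show IsSmallestAttractor (F (m+8)) {y + fib (m+4), x + fib (m+6)}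
  constructor
  · -- IsAttractor
    constructor
    · intro k hk
      rw [F_length]
      rcases Finset.mem_insert.mp hk with h | h
      · omega
      · rw [Finset.mem_singleton] at h; omega
    · intro w hw hinf
      have hL : 1 ≤ w.length := List.length_pos_iff.mpr hw
      obtain ⟨j, hj1, hjb, hjw⟩ := infix_occursAt hinf
      rw [F_length] at hjb
      have hjocc : OccursAt (F (m+8)) w j := ⟨hj1, by rw [F_length]; omega, hjw⟩
      by_cases h1 : j ≤ y + fib (m+4) ∧ y + fib (m+4) < j + w.length
      · exact ⟨j, hjocc, y + fib (m+4), Finset.mem_insert_self _ _, h1.1, h1.2⟩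
      by_cases h2 : j ≤ x + fib (m+6) ∧ x + fib (m+6) < j + w.length
      · exact ⟨j, hjocc, x + fib (m+6), by simp, h2.1, h2.2⟩
      have winf : w <:+: F (m+7) := by
        have hcase : j + w.length ≤ y + fib (m+4) ∨ (x + fib (m+6) < j) ∨
            (y + fib (m+4) < j ∧ j + w.length ≤ x + fib (m+6)) := by omega
        rcases hcase with hc | hc | hc
        · exact occursAt_infix (occ_transfer hW1.symm (by rw [F_length]; omega)
            (by omega) (by omega) hjocc)
        · exact occursAt_infix (occ_transfer hW4 (by rw [F_length]; omega)
            (by omega) (by omega) hjocc)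
        · exact occursAt_infix (occ_transfer hW2.symm (by rw [F_length]; omega)
            (by omega) (by omega) hjocc)
      obtain ⟨i, ⟨hi1, hib, hiw⟩, k, hkmem, hik, hki⟩ := hatt.2 w hw winf
      rw [F_length] at hib
      have hiocc : OccursAt (F (m+7)) w i := ⟨hi1, by rw [F_length]; omega, hiw⟩
      have hkxy : k = x ∨ k = y := by
        rcases Finset.mem_insert.mp hkmem with h | h
        · exact Or.inl h
        · exact Or.inr (Finset.mem_singleton.mp h)
      by_cases hA : fib (m+7) ≤ i + w.length
      · refine ⟨0 + (i - 0), occ_transfer hW1 (by rw [F_length]; omega) (by omega) (by omega)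
          hiocc, y + fib (m+4), Finset.mem_insert_self _ _, by omega, by omega⟩
      · by_cases hBc : i ≤ x
        · refine ⟨fib (m+6) + (i - 0), occ_transfer hW2 (by rw [F_length]; omega) (by omega)
            (by omega) hiocc, x + fib (m+6), by simp, by omega, by omega⟩
        · refine ⟨fib (m+6) + (i - fib (m+5)), occ_transfer hW3 (by rw [F_length]; omega)
            (by omega) (by omega) hiocc, y + fib (m+4), Finset.mem_insert_self _ _,
            by omega, by omega⟩
  · -- minimality
    intro Γ' hΓ'
    have ht2 := F_take_two (m+6)
    rw [show m+6+2 = m+8 from rfl] at ht2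
    have hpref : F (m+8) = [false] ++ ([true] ++ (F (m+8)).drop 2) := by
      conv_lhs => rw [← List.take_append_drop 2 (F (m+8))]
      rw [ht2]
      rfl
    have hfin : [false] <:+: F (m+8) := ⟨[], [true] ++ (F (m+8)).drop 2, by
      conv_rhs => rw [hpref]
      simp⟩
    have htin : [true] <:+: F (m+8) := ⟨[false], (F (m+8)).drop 2, by
      conv_rhs => rw [hpref]
      simp⟩
    obtain ⟨i1, ⟨hi11, hi1b, hi1w⟩, k1, hk1, hik1, hik1'⟩ :=
      hΓ'.2 [false] (List.cons_ne_nil _ _) hfin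
    obtain ⟨i2, ⟨hi21, hi2b, hi2w⟩, k2, hk2, hik2, hik2'⟩ :=
      hΓ'.2 [true] (List.cons_ne_nil _ _) htin
    have hl1 : ([false] : List Bool).length = 1 := rfl
    have hl2 : ([true] : List Bool).length = 1 := rfl
    rw [hl1] at hik1'
    rw [hl2] at hik2'
    have hk12 : k1 ≠ k2 := by
      intro he
      have e12 : i1 = i2 := by omega
      rw [e12] at hi1w
      have : ([false] : List Bool) = [true] := by
        rw [← hi1w, ← hi2w]
        rfl
      simp at this
    calc ({y + fib (m+4), x + fib (m+6)} : Finset ℕ).card = 2 :=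
          Finset.card_pair (by omega)
      _ ≤ Γ'.card := Finset.one_lt_card.mpr ⟨k1, hk1, k2, hk2, hk12⟩
end

section
/- For every i ≥ 2, the string G_i = F_i[1 .. f_i − 2] (the Fibonacci word F_i with its last two symbols removed) is a palindrome; moreover, for every i ≥ 5, F_i = G_{i-2} · (F_{i-1})^R · Δ_i, where Δ_i = F_i[f_i − 1 .. f_i] is the final two symbols of F_i and (F_{i-1})^R is the reverse of F_{i-1}. -/
/-- G_n = F_n with its last two symbols removed. -/
def G (n : ℕ) : List Bool := (F n).take (fib n - 2)

/-- Δ_n = the final two symbols of F_n. -/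
def Δ (n : ℕ) : List Bool := (F n).drop (fib n - 2)

lemma lenF : ∀ n, (F n).length = fib n := by
  intro n
  induction n using Nat.strong_induction_on with
  | _ n ih =>
    match n with
    | 0 => rfl
    | 1 => rfl
    | n + 2 =>
      simp [F, fib, ih (n+1) (by omega), ih n (by omega)]

lemma fib_ge_two : ∀ n, 2 ≤ n → 2 ≤ fib n := by
  intro n
  induction n using Nat.strong_induction_on with
  | _ n ih =>
    match n with
    | 0 => omega
    | 1 => omega
    | 2 => intro _; rfl
    | 3 => intro _; decide
    | n + 4 =>
      intro _
      have h1 := ih (n+3) (by omega) (by omega)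
      rw [show fib (n+4) = fib (n+3) + fib (n+2) from rfl]
      omega

lemma FGD (n : ℕ) : F n = G n ++ Δ n := (List.take_append_drop _ _).symm

lemma GA (n : ℕ) (h : 2 ≤ n) : G (n + 2) = F (n + 1) ++ G n := by
  have hfib : fib (n + 2) - 2 = (F (n+1)).length + (fib n - 2) := by
    have := fib_ge_two n h
    simp [lenF, fib]; omega
  show (F (n+2)).take (fib (n+2) - 2) = _
  rw [show F (n+2) = F (n+1) ++ F n from rfl, hfib, List.take_length_add_append]
  rfl

lemma DA (n : ℕ) (h : 2 ≤ n) : Δ (n + 2) = Δ n := by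
  have hfib : fib (n + 2) - 2 = (F (n+1)).length + (fib n - 2) := by
    have := fib_ge_two n h
    simp [lenF, fib]; omega
  show (F (n+2)).drop (fib (n+2) - 2) = _
  rw [show F (n+2) = F (n+1) ++ F n from rfl, hfib, List.drop_length_add_append]
  rfl

lemma DR : ∀ n, 2 ≤ n → (Δ (n + 1)).reverse = Δ n := by
  intro n
  induction n using Nat.strong_induction_on with
  | _ n ih =>
    match n with
    | 0 => omega
    | 1 => omega
    | 2 => intro _; decide
    | 3 => intro _; decide
    | n + 4 =>
      intro _
      rw [show n + 4 + 1 = (n + 3) + 2 from rfl, DA (n+3) (by omega),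
        DA (n+2) (by omega)]
      exact ih (n+2) (by omega) (by omega)

lemma GB : ∀ n, 2 ≤ n → G (n + 2) = F n ++ G (n + 1) := by
  intro n
  induction n using Nat.strong_induction_on with
  | _ n ih =>
    match n with
    | 0 => omega
    | 1 => omega
    | 2 => intro _; decide
    | n + 3 =>
      intro _
      rw [GA (n+3) (by omega), show F (n + 3 + 1) = F (n+3) ++ F (n+2) from rfl,
        List.append_assoc]
      congr 1
      exact (ih (n+2) (by omega) (by omega)).symm

lemma Gpal : ∀ n, 2 ≤ n → (G n).reverse = G n := by
  have key : ∀ n, (G (n+2)).reverse = G (n+2) ∧ (G (n+3)).reverse = G (n+3) := by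
    intro n
    induction n with
    | zero => exact ⟨by decide, by decide⟩
    | succ n ih =>
      refine ⟨ih.2, ?_⟩
      show (G ((n+2)+2)).reverse = G ((n+2)+2)
      calc (G ((n+2)+2)).reverse
          = (F (n+3) ++ G (n+2)).reverse := by rw [GA (n+2) (by omega)]
        _ = G (n+2) ++ (F (n+3)).reverse := by rw [List.reverse_append, ih.1]
        _ = G (n+2) ++ ((Δ (n+3)).reverse ++ G (n+3)) := by
              rw [FGD (n+3), List.reverse_append, ih.2]
        _ = (G (n+2) ++ Δ (n+2)) ++ G (n+3) := by
              rw [DR (n+2) (by omega), List.append_assoc]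
        _ = F (n+2) ++ G (n+3) := by rw [← FGD (n+2)]
        _ = G ((n+2)+2) := (GB (n+2) (by omega)).symm
  intro n hn
  match n, hn with
  | n + 2, _ => exact (key n).1

/-- For every i ≥ 2, G_i is a palindrome, and for every i ≥ 5,
F_i = G_{i-2} · (F_{i-1})^R · Δ_i. -/
theorem g_palindrome_and_fib_reverse_factorization :
    (∀ i : ℕ, 2 ≤ i → (G i).reverse = G i) ∧
    (∀ i : ℕ, 5 ≤ i → F i = G (i - 2) ++ (F (i - 1)).reverse ++ Δ i) := by
  constructor
  · exact Gpal
  · intro i hi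
    obtain ⟨n, rfl⟩ : ∃ n, i = n + 5 := ⟨i - 5, by omega⟩
    have h1 : n + 5 - 2 = n + 3 := by omega
    have h2 : n + 5 - 1 = n + 4 := by omega
    rw [h1, h2, FGD (n+4), List.reverse_append, Gpal (n+4) (by omega),
      DR (n+3) (by omega)]
    rw [show n + 5 = (n + 3) + 2 from rfl, FGD ((n+3)+2), GB (n+3) (by omega),
      FGD (n+3)]
    simp [List.append_assoc]
end
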